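/- arXiv:1502.04647 — 6 statements merged into one kernel-verified Lean document; each statement's English description precedes it below -/
import Mathlib

section
/- If f : (0,∞) → ℝ is completely monotone and φ : (0,∞) → ℝ is a Bernstein function with range contained in (0,∞), then the composition f ∘ φ is completely monotone. -/
open Set

def CompletelyMonotoneOn (f : ℝ → ℝ) : Prop :=
  ContDiffOn ℝ (⊤ : ℕ∞) f (Ioi 0) ∧
  ∀ n : ℕ, ∀ t ∈ Ioi (0:ℝ), 0 ≤ (-1)^n * iteratedDerivWithin n f (Ioi 0) t

def BernsteinFn (φ : ℝ → ℝ) : Prop :=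
  ContDiffOn ℝ (⊤ : ℕ∞) φ (Ioi 0) ∧
  (∀ t ∈ Ioi (0:ℝ), 0 ≤ φ t) ∧
  CompletelyMonotoneOn (derivWithin φ (Ioi 0))

private lemma hsIoi : UniqueDiffOn ℝ (Ioi (0:ℝ)) := uniqueDiffOn_Ioi 0

/-- If `g` is completely monotone then so is `-g'`. -/
private lemma cm_negDeriv {g : ℝ → ℝ} (hg : CompletelyMonotoneOn g) :
    CompletelyMonotoneOn (fun x => -(derivWithin g (Ioi 0) x)) := by
  constructor
  · exact (hg.1.derivWithin hsIoi (by simp)).neg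
  · intro n t ht
    have h1 : iteratedDerivWithin n (fun x => -(derivWithin g (Ioi 0) x)) (Ioi 0) t
        = -(iteratedDerivWithin n (derivWithin g (Ioi 0)) (Ioi 0) t) :=
      iteratedDerivWithin_fun_neg _
    have h2 : iteratedDerivWithin (n+1) g (Ioi 0) t
        = iteratedDerivWithin n (derivWithin g (Ioi 0)) (Ioi 0) t :=
      congrFun iteratedDerivWithin_succ' t
    have h3 := hg.2 (n+1) t ht
    rw [h1, ← h2]
    rw [pow_succ] at h3
    have : (-1:ℝ)^n * -iteratedDerivWithin (n+1) g (Ioi 0) t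
        = (-1)^n * -1 * iteratedDerivWithin (n+1) g (Ioi 0) t := by ring
    linarith [h3]

/-- Sign of iterated derivatives of a product. -/
private lemma cm_mul_sign : ∀ n : ℕ, ∀ u : ℝ → ℝ, ContDiffOn ℝ (⊤ : ℕ∞) u (Ioi 0) →
    (∀ k, k ≤ n → ∀ t ∈ Ioi (0:ℝ), 0 ≤ (-1)^k * iteratedDerivWithin k u (Ioi 0) t) →
    ∀ v : ℝ → ℝ, CompletelyMonotoneOn v →
    ∀ t ∈ Ioi (0:ℝ), 0 ≤ (-1)^n * iteratedDerivWithin n (fun x => u x * v x) (Ioi 0) t := by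
  intro n
  induction n with
  | zero =>
    intro u _ hu v hv t ht
    have h1 := hu 0 le_rfl t ht
    have h2 := hv.2 0 t ht
    simp only [pow_zero, one_mul, iteratedDerivWithin_zero] at h1 h2 ⊢
    exact mul_nonneg h1 h2
  | succ n IH =>
    intro u hu hus v hv t ht
    set u1 : ℝ → ℝ := fun x => -(derivWithin u (Ioi 0) x) with hu1def
    set v1 : ℝ → ℝ := fun x => -(derivWithin v (Ioi 0) x) with hv1def
    have hu1 : ContDiffOn ℝ (⊤ : ℕ∞) u1 (Ioi 0) := (hu.derivWithin hsIoi (by simp)).neg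
    have hv1 : CompletelyMonotoneOn v1 := cm_negDeriv hv
    have hu1s : ∀ k, k ≤ n → ∀ t ∈ Ioi (0:ℝ),
        0 ≤ (-1)^k * iteratedDerivWithin k u1 (Ioi 0) t := by
      intro k hk t' ht'
      have h1 : iteratedDerivWithin k u1 (Ioi 0) t'
          = -(iteratedDerivWithin k (derivWithin u (Ioi 0)) (Ioi 0) t') :=
        iteratedDerivWithin_fun_neg _
      have h2 : iteratedDerivWithin (k+1) u (Ioi 0) t'
          = iteratedDerivWithin k (derivWithin u (Ioi 0)) (Ioi 0) t' :=
        congrFun iteratedDerivWithin_succ' t'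
      have h3 := hus (k+1) (by omega) t' ht'
      rw [h1, ← h2]
      rw [pow_succ] at h3
      have : (-1:ℝ)^k * -iteratedDerivWithin (k+1) u (Ioi 0) t'
          = (-1)^k * -1 * iteratedDerivWithin (k+1) u (Ioi 0) t' := by ring
      linarith [h3]
    have hus' : ∀ k, k ≤ n → ∀ t ∈ Ioi (0:ℝ),
        0 ≤ (-1)^k * iteratedDerivWithin k u (Ioi 0) t :=
      fun k hk => hus k (by omega)
    -- the derivative of the product
    have heq : Set.EqOn (derivWithin (fun x => u x * v x) (Ioi 0))
        (fun x => -(((fun y => u1 y * v y) + fun y => u y * v1 y) x)) (Ioi 0) := by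
      intro x hx
      have hud : DifferentiableWithinAt ℝ u (Ioi 0) x := hu.differentiableOn (by simp) x hx
      have hvd : DifferentiableWithinAt ℝ v (Ioi 0) x := hv.1.differentiableOn (by simp) x hx
      have := derivWithin_fun_mul hud hvd
      simp only [hu1def, hv1def, Pi.add_apply]
      rw [this]
      ring
    have hcd1 : ContDiffOn ℝ (n : WithTop ℕ∞) (fun y => u1 y * v y) (Ioi 0) :=
      (hu1.mul hv.1).of_le (by exact_mod_cast le_top)
    have hcd2 : ContDiffOn ℝ (n : WithTop ℕ∞) (fun y => u y * v1 y) (Ioi 0) :=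
      (hu.mul hv1.1).of_le (by exact_mod_cast le_top)
    have hstep : iteratedDerivWithin (n+1) (fun x => u x * v x) (Ioi 0) t
        = -(iteratedDerivWithin n (fun y => u1 y * v y) (Ioi 0) t
            + iteratedDerivWithin n (fun y => u y * v1 y) (Ioi 0) t) := by
      rw [iteratedDerivWithin_succ',
        iteratedDerivWithin_congr heq ht,
        iteratedDerivWithin_fun_neg _,
        iteratedDerivWithin_add ht hsIoi (hcd1 t ht) (hcd2 t ht)]
    have hA := IH u1 hu1 hu1s v hv t ht
    have hB := IH u hu hus' v1 hv1 t ht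
    rw [hstep, pow_succ]
    nlinarith [hA, hB]

theorem cm_comp_bernstein (f φ : ℝ → ℝ) (hf : CompletelyMonotoneOn f)
    (hφ : BernsteinFn φ) (hrange : ∀ t ∈ Ioi (0:ℝ), φ t ∈ Ioi (0:ℝ)) :
    CompletelyMonotoneOn (f ∘ φ) := by
  have hmaps : Set.MapsTo φ (Ioi (0:ℝ)) (Ioi (0:ℝ)) := fun t ht => hrange t ht
  have key : ∀ n : ℕ, ∀ g : ℝ → ℝ, CompletelyMonotoneOn g →
      ∀ t ∈ Ioi (0:ℝ), 0 ≤ (-1)^n * iteratedDerivWithin n (g ∘ φ) (Ioi 0) t := by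
    intro n
    induction n using Nat.strong_induction_on with
    | _ n IH =>
      match n with
      | 0 =>
        intro g hg t ht
        have := hg.2 0 (φ t) (hrange t ht)
        simpa [iteratedDerivWithin_zero] using this
      | Nat.succ n =>
        intro g hg t ht
        set g1 : ℝ → ℝ := fun x => -(derivWithin g (Ioi 0) x) with hg1def
        have hg1 : CompletelyMonotoneOn g1 := cm_negDeriv hg
        have hψ : CompletelyMonotoneOn (derivWithin φ (Ioi 0)) := hφ.2.2
        have heq : Set.EqOn (derivWithin (g ∘ φ) (Ioi 0))
            (fun x => -((g1 ∘ φ) x * derivWithin φ (Ioi 0) x)) (Ioi 0) := by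
          intro x hx
          have hgd : DifferentiableWithinAt ℝ g (Ioi 0) (φ x) :=
            hg.1.differentiableOn (by simp) (φ x) (hrange x hx)
          have hφd : DifferentiableWithinAt ℝ φ (Ioi 0) x :=
            hφ.1.differentiableOn (by simp) x hx
          have := derivWithin_comp (x := x) hgd hφd hmaps
          simp only [hg1def, Function.comp]
          rw [this]
          ring
        have hu : ContDiffOn ℝ (⊤ : ℕ∞) (g1 ∘ φ) (Ioi 0) := hg1.1.comp hφ.1 hmaps
        have hus : ∀ k, k ≤ n → ∀ t' ∈ Ioi (0:ℝ),
            0 ≤ (-1)^k * iteratedDerivWithin k (g1 ∘ φ) (Ioi 0) t' := by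
          intro k hk t' ht'
          exact IH k (by omega) g1 hg1 t' ht'
        have hmul := cm_mul_sign n (g1 ∘ φ) hu hus (derivWithin φ (Ioi 0)) hψ t ht
        have hstep : iteratedDerivWithin (n+1) (g ∘ φ) (Ioi 0) t
            = -(iteratedDerivWithin n (fun x => (g1 ∘ φ) x * derivWithin φ (Ioi 0) x)
                (Ioi 0) t) := by
          rw [iteratedDerivWithin_succ',
            iteratedDerivWithin_congr heq ht,
            iteratedDerivWithin_fun_neg _]
        rw [hstep, pow_succ]
        nlinarith [hmul]
  exact ⟨hf.1.comp hφ.1 hmaps, fun n t ht => key n f hf t ht⟩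
end

section
/- Let 1 > α > α₁ > ... > α_m > 0 and b₁,...,b_m > 0. For any complex number s with s ≠ 0 and |arg s| < π, the function h(s) = s^α + Σ_{j=1}^m b_j s^{α_j} satisfies h(s) ≠ 0, i.e., h has no zeros in the slit plane ℂ \ (-∞, 0]. -/
open Set

theorem multiterm_no_zeros (m : ℕ) (α : ℝ) (α' b : Fin m → ℝ)
    (hα1 : α < 1) (hα0 : 0 < α)
    (hlt : ∀ j, α' j < α) (hpos : ∀ j, 0 < α' j)
    (hanti : ∀ i j : Fin m, i < j → α' j < α' i)
    (hb : ∀ j, 0 < b j)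
    (s : ℂ) (hs : s ≠ 0) (harg : |Complex.arg s| < Real.pi) :
    s ^ (α : ℂ) + ∑ j, (b j : ℂ) * s ^ (α' j : ℂ) ≠ 0 := by
  set θ : ℝ := Complex.arg s with hθdef
  set c : ℝ := α * θ / 2 with hc
  have hr : 0 < ‖s‖ := norm_pos_iff.mpr hs
  have hθ1 : θ < Real.pi := (abs_lt.1 harg).2
  have hθ2 : -Real.pi < θ := (abs_lt.1 harg).1
  have key : ∀ β : ℝ, 0 < β → β ≤ α →
      0 < (Complex.exp (-(c:ℂ) * Complex.I) * s ^ (β:ℂ)).re := by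
    intro β hβ0 hβα
    rw [Complex.cpow_def_of_ne_zero hs, ← Complex.exp_add, Complex.exp_re]
    have hre : (-(c:ℂ) * Complex.I + Complex.log s * β).re
        = Real.log (‖s‖) * β := by
      simp [Complex.log_re]
    have him : (-(c:ℂ) * Complex.I + Complex.log s * β).im = θ * β - c := by
      simp [Complex.log_im]; ring
    rw [hre, him]
    apply mul_pos (Real.exp_pos _)
    apply Real.cos_pos_of_mem_Ioo
    constructor
    · simp only [hc]
      nlinarith [Real.pi_pos, mul_self_nonneg (θ * (β - α/2))]
    · simp only [hc]
      nlinarith [Real.pi_pos, mul_self_nonneg (θ * (β - α/2))]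
  intro hzero
  have h0 : (Complex.exp (-(c:ℂ) * Complex.I)
      * (s ^ (α:ℂ) + ∑ j, (b j : ℂ) * s ^ (α' j : ℂ))).re = 0 := by
    rw [hzero, mul_zero, Complex.zero_re]
  rw [mul_add, Finset.mul_sum] at h0
  simp only [Complex.add_re, Complex.re_sum, mul_left_comm, Complex.re_ofReal_mul] at h0
  have hA := key α hα0 le_rfl
  have hB : 0 ≤ ∑ j, b j * (Complex.exp (-(c:ℂ) * Complex.I) * s ^ (α' j : ℂ)).re :=
    Finset.sum_nonneg fun j _ => le_of_lt (mul_pos (hb j) (key _ (hpos j) (hlt j).le))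
  linarith
end

section
/- Let 1 > α > α₁ > ... > α_m > 0 and b₁,...,b_m > 0, and let h(s) = s^α + Σ_{j=1}^m b_j s^{α_j} (principal branches). Then for every s in the slit plane ℂ \ (-∞,0], |arg h(s)| ≤ α |arg s|. -/
open Set

private lemma cpow_im_eq (s : ℂ) (hs : s ≠ 0) (β : ℝ) :
    (s ^ (β:ℂ)).im = Real.exp (β * Real.log (‖s‖)) * Real.sin (β * s.arg) := by
  rw [Complex.cpow_def_of_ne_zero hs, Complex.exp_im]
  congr 2
  · simp [Complex.log_re]; ring
  · simp [Complex.log_im]; ring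

private lemma rot_cpow_im (s : ℂ) (hs : s ≠ 0) (β ψ : ℝ) :
    (Complex.exp (-(ψ:ℂ) * Complex.I) * s ^ (β:ℂ)).im
      = Real.exp (β * Real.log (‖s‖)) * Real.sin (β * s.arg - ψ) := by
  rw [Complex.cpow_def_of_ne_zero hs, ← Complex.exp_add, Complex.exp_im]
  congr 2
  · simp [Complex.log_re]; ring
  · simp [Complex.log_im]; ring

private lemma arg_le_aux (z : ℂ) (hz : z ≠ 0) (ψ : ℝ) (hψ0 : 0 < ψ) (hψπ : ψ < Real.pi)
    (him : 0 ≤ z.im) (h2 : 0 ≤ Real.sin ψ * z.re - Real.cos ψ * z.im) : z.arg ≤ ψ := by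
  by_contra h
  push_neg at h
  have hzarg0 : 0 ≤ z.arg := Complex.arg_nonneg_iff.mpr him
  have hzargπ : z.arg ≤ Real.pi := Complex.arg_le_pi z
  have hsin : Real.sin (ψ - z.arg) < 0 :=
    Real.sin_neg_of_neg_of_neg_pi_lt (by linarith) (by linarith)
  have habs : 0 < ‖z‖ := norm_pos_iff.mpr hz
  have heq : Real.sin (ψ - z.arg)
      = (Real.sin ψ * z.re - Real.cos ψ * z.im) / ‖z‖ := by
    rw [Real.sin_sub, Complex.cos_arg hz, Complex.sin_arg]
    field_simp
  rw [heq] at hsin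
  have := div_nonneg h2 habs.le
  linarith

private lemma multiterm_arg_bound_aux (m : ℕ) (α : ℝ) (α' b : Fin m → ℝ)
    (hα1 : α < 1) (hα0 : 0 < α)
    (hlt : ∀ j, α' j < α) (hpos : ∀ j, 0 < α' j)
    (hb : ∀ j, 0 < b j)
    (s : ℂ) (hs : s ≠ 0) (harg : |Complex.arg s| < Real.pi)
    (hargnn : 0 ≤ Complex.arg s) :
    |Complex.arg (s ^ (α : ℂ) + ∑ j, (b j : ℂ) * s ^ (α' j : ℂ))| ≤
      α * |Complex.arg s| := by
  set θ := Complex.arg s with hθ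
  rcases eq_or_lt_of_le hargnn with h0 | hθpos
  · -- s is a positive real
    have hre : 0 ≤ s.re ∧ s.im = 0 := Complex.arg_eq_zero_iff.mp h0.symm
    have hsre : 0 < s.re := by
      rcases lt_or_eq_of_le hre.1 with h | h
      · exact h
      · exfalso; apply hs; apply Complex.ext <;> simp [← h, hre.2]
    have hse : s = ((s.re : ℝ) : ℂ) := by
      apply Complex.ext <;> simp [hre.2]
    have key : ∀ β : ℝ, s ^ (β:ℂ) = ((s.re ^ β : ℝ) : ℂ) := by
      intro β
      rw [Complex.ofReal_cpow hsre.le, ← hse]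
    have hzz : s ^ (α : ℂ) + ∑ j, (b j : ℂ) * s ^ (α' j : ℂ)
        = (((s.re ^ α + ∑ j, b j * s.re ^ (α' j) : ℝ)) : ℂ) := by
      rw [key]
      push_cast
      congr 1
      exact Finset.sum_congr rfl fun j _ => by rw [key]
    rw [hzz, Complex.arg_ofReal_of_nonneg, ← h0]
    · simp
    · have : 0 ≤ ∑ j, b j * s.re ^ (α' j) :=
        Finset.sum_nonneg fun j _ => mul_nonneg (hb j).le (Real.rpow_nonneg hsre.le _)
      have h2 : 0 < s.re ^ α := Real.rpow_pos_of_pos hsre _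
      linarith
  · -- 0 < θ
    have hθπ : θ < Real.pi := lt_of_le_of_lt (le_abs_self _) harg
    have hαθπ : α * θ < Real.pi := by nlinarith
    have hαθ0 : 0 < α * θ := mul_pos hα0 hθpos
    set z := s ^ (α : ℂ) + ∑ j, (b j : ℂ) * s ^ (α' j : ℂ) with hz
    have hzim : 0 < z.im := by
      rw [hz, Complex.add_im, Complex.im_sum]
      have h1 : 0 < (s ^ (α:ℂ)).im := by
        rw [cpow_im_eq s hs, ← hθ]
        exact mul_pos (Real.exp_pos _) (Real.sin_pos_of_pos_of_lt_pi hαθ0 hαθπ)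
      have h2 : ∀ j ∈ Finset.univ, (0:ℝ) ≤ ((b j : ℂ) * s ^ ((α' j : ℝ) : ℂ)).im := by
        intro j _
        rw [Complex.im_ofReal_mul, cpow_im_eq s hs, ← hθ]
        have h3 : 0 < α' j * θ := mul_pos (hpos j) hθpos
        have h4 : α' j * θ < Real.pi := by nlinarith [hlt j, hpos j]
        have h5 := Real.sin_pos_of_pos_of_lt_pi h3 h4
        have h6 := Real.exp_pos (α' j * Real.log (‖s‖))
        exact mul_nonneg (hb j).le (mul_nonneg h6.le h5.le)
      exact add_pos_of_pos_of_nonneg h1 (Finset.sum_nonneg h2)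
    have hz0 : z ≠ 0 := fun h => by rw [h] at hzim; simp at hzim
    -- the rotated sum has nonpositive imaginary part
    set ψ := α * θ with hψ
    have hrot : (Complex.exp (-(ψ:ℂ) * Complex.I) * z).im ≤ 0 := by
      rw [hz, mul_add, Finset.mul_sum, Complex.add_im, Complex.im_sum]
      have h1 : (Complex.exp (-(ψ:ℂ) * Complex.I) * s ^ ((α:ℝ):ℂ)).im = 0 := by
        rw [rot_cpow_im s hs, ← hθ]
        simp [hψ]
      have h2 : ∀ j ∈ Finset.univ,
          (Complex.exp (-(ψ:ℂ) * Complex.I) * ((b j : ℂ) * s ^ ((α' j : ℝ) : ℂ))).im ≤ 0 := by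
        intro j _
        rw [mul_left_comm, Complex.im_ofReal_mul, rot_cpow_im s hs, ← hθ]
        have h3 : α' j * θ - ψ < 0 := by
          rw [hψ]; nlinarith [hlt j]
        have h4 : -Real.pi < α' j * θ - ψ := by
          have := mul_pos (hpos j) hθpos
          nlinarith
        have hsn := Real.sin_neg_of_neg_of_neg_pi_lt h3 h4
        have he := Real.exp_pos (α' j * Real.log (‖s‖))
        nlinarith [mul_pos (hb j) he, hsn]
      rw [h1]
      simpa using Finset.sum_nonpos h2
    have hcond : 0 ≤ Real.sin ψ * z.re - Real.cos ψ * z.im := by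
      have hre : (Complex.exp (-(ψ:ℂ) * Complex.I)).re = Real.cos ψ := by
        rw [Complex.exp_re]; simp
      have him : (Complex.exp (-(ψ:ℂ) * Complex.I)).im = -Real.sin ψ := by
        rw [Complex.exp_im]; simp
      have : (Complex.exp (-(ψ:ℂ) * Complex.I) * z).im
          = Real.cos ψ * z.im - Real.sin ψ * z.re := by
        rw [Complex.mul_im, hre, him]; ring
      rw [this] at hrot
      linarith
    have hfin : z.arg ≤ ψ := arg_le_aux z hz0 ψ hαθ0 hαθπ hzim.le hcond
    have h0 : 0 ≤ z.arg := Complex.arg_nonneg_iff.mpr hzim.le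
    rw [abs_of_nonneg h0, abs_of_nonneg hargnn]
    exact hfin

theorem multiterm_arg_bound (m : ℕ) (α : ℝ) (α' b : Fin m → ℝ)
    (hα1 : α < 1) (hα0 : 0 < α)
    (hlt : ∀ j, α' j < α) (hpos : ∀ j, 0 < α' j)
    (hanti : ∀ i j : Fin m, i < j → α' j < α' i)
    (hb : ∀ j, 0 < b j)
    (s : ℂ) (hs : s ≠ 0) (harg : |Complex.arg s| < Real.pi) :
    |Complex.arg (s ^ (α : ℂ) + ∑ j, (b j : ℂ) * s ^ (α' j : ℂ))| ≤
      α * |Complex.arg s| := by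
  rcases le_or_gt 0 (Complex.arg s) with h | h
  · exact multiterm_arg_bound_aux m α α' b hα1 hα0 hlt hpos hb s hs harg h
  · have hπ : Complex.arg s ≠ Real.pi := by
      intro he; rw [he] at h; exact absurd h (not_lt.mpr Real.pi_pos.le)
    set t := (starRingEnd ℂ) s with ht
    have ht0 : t ≠ 0 := by simpa [ht] using hs
    have hargt : Complex.arg t = -Complex.arg s := by
      rw [ht, Complex.arg_conj, if_neg hπ]
    have habs : |Complex.arg t| = |Complex.arg s| := by rw [hargt, abs_neg]
    have haux := multiterm_arg_bound_aux m α α' b hα1 hα0 hlt hpos hb t ht0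
      (by rwa [habs]) (by rw [hargt]; linarith)
    have hkey : ∀ β : ℝ, t ^ ((β:ℝ):ℂ) = (starRingEnd ℂ) (s ^ ((β:ℝ):ℂ)) := by
      intro β
      rw [ht, Complex.conj_cpow s _ hπ, Complex.conj_ofReal]
    have heq : t ^ ((α:ℝ):ℂ) + ∑ j, (b j : ℂ) * t ^ ((α' j : ℝ) : ℂ)
        = (starRingEnd ℂ) (s ^ ((α:ℝ):ℂ) + ∑ j, (b j : ℂ) * s ^ ((α' j : ℝ) : ℂ)) := by
      rw [map_add, map_sum, hkey]
      congr 1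
      refine Finset.sum_congr rfl fun j _ => ?_
      rw [map_mul, hkey, Complex.conj_ofReal]
    rw [heq] at haux
    rw [habs] at haux
    have habsz : |Complex.arg ((starRingEnd ℂ) (s ^ ((α:ℝ):ℂ) + ∑ j, (b j : ℂ) * s ^ ((α' j : ℝ) : ℂ)))| = |Complex.arg (s ^ ((α:ℝ):ℂ) + ∑ j, (b j : ℂ) * s ^ ((α' j : ℝ) : ℂ))| := by
      rw [Complex.arg_conj]
      split
      · rename_i hc; rw [hc]
      · rw [abs_neg]
    rwa [habsz] at haux
end

section
/- Let μ : [0,1] → ℝ be continuous and nonnegative. Then the function k₂(t) = ∫₀¹ μ(β) t^(-β)/Γ(1-β) dβ is completely monotone on (0,∞). -/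
open Set

open MeasureTheory Filter ContDiff

/-- coefficient function -/
noncomputable def k2aux (μ : ℝ → ℝ) (n : ℕ) (β : ℝ) : ℝ :=
  μ β * (∏ k ∈ Finset.range n, (-(β + (k:ℝ)))) * (Real.Gamma (1 - β))⁻¹

/-- real n-th derivative candidate -/
noncomputable def k2g (μ : ℝ → ℝ) (n : ℕ) (t : ℝ) : ℝ :=
  ∫ β in Icc (0:ℝ) 1, k2aux μ n β * t ^ (-β - (n:ℝ))

/-- complex version -/
noncomputable def k2K (μ : ℝ → ℝ) (n : ℕ) (z : ℂ) : ℂ :=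
  ∫ β in Icc (0:ℝ) 1, (k2aux μ n β : ℂ) * z ^ (((-β - (n:ℝ)) : ℝ) : ℂ)

lemma k2aux_succ (μ : ℝ → ℝ) (n : ℕ) (β : ℝ) :
    k2aux μ (n+1) β = k2aux μ n β * (-β - (n:ℝ)) := by
  unfold k2aux
  rw [Finset.prod_range_succ]
  ring

lemma contGammaInv : Continuous fun β : ℝ => (Real.Gamma (1 - β))⁻¹ := by
  have h : ∀ β : ℝ, (Real.Gamma (1 - β))⁻¹ = ((Complex.Gamma ((1:ℂ) - (β:ℂ)))⁻¹).re := by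
    intro β
    rw [show ((1:ℂ) - (β:ℂ)) = ((1 - β : ℝ) : ℂ) by push_cast; ring, Complex.Gamma_ofReal,
      ← Complex.ofReal_inv, Complex.ofReal_re]
  simp only [h]
  exact Complex.continuous_re.comp
    (Complex.differentiable_one_div_Gamma.continuous.comp
      (continuous_const.sub Complex.continuous_ofReal))

lemma k2aux_contOn (μ : ℝ → ℝ) (hcont : ContinuousOn μ (Icc 0 1)) (n : ℕ) :
    ContinuousOn (k2aux μ n) (Icc 0 1) := by
  refine ContinuousOn.mul (ContinuousOn.mul hcont ?_) contGammaInv.continuousOn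
  exact (continuous_finset_prod _ fun k _ => by continuity).continuousOn

lemma cont_cpow_exp (x : ℂ) (hx : x ≠ 0) (c : ℝ) :
    Continuous fun β : ℝ => x ^ (((-β - c : ℝ)) : ℂ) := by
  have h : ∀ β : ℝ, x ^ (((-β - c : ℝ)) : ℂ) =
      Complex.exp (Complex.log x * ((-β - c : ℝ) : ℂ)) := fun β =>
    Complex.cpow_def_of_ne_zero hx _
  simp only [h]
  exact Complex.continuous_exp.comp
    (continuous_const.mul (Complex.continuous_ofReal.comp (by continuity)))

lemma k2K_hasDeriv (μ : ℝ → ℝ) (hcont : ContinuousOn μ (Icc 0 1)) (n : ℕ)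
    (z : ℂ) (hz : 0 < z.re) : HasDerivAt (k2K μ n) (k2K μ (n+1) z) z := by
  have hε0 : 0 < z.re / 2 := by positivity
  have hz0 : z ≠ 0 := fun h => by simp [h] at hz
  have hball : ∀ x ∈ Metric.ball z (z.re / 2), z.re / 2 < x.re := by
    intro x hx
    rw [Metric.mem_ball, Complex.dist_eq] at hx
    have h1 : |(x - z).re| ≤ ‖x - z‖ := Complex.abs_re_le_norm _
    have h2 : |x.re - z.re| < z.re / 2 := lt_of_le_of_lt (by simpa using h1) hx
    have := (abs_lt.1 h2).1
    linarith
  have hmeas : ∀ m : ℕ, ∀ x : ℂ, x ≠ 0 →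
      AEStronglyMeasurable (fun β : ℝ => (k2aux μ m β : ℂ) * x ^ (((-β - (m:ℝ)) : ℝ) : ℂ))
        (volume.restrict (Icc 0 1)) := by
    intro m x hx
    refine ContinuousOn.aestronglyMeasurable ?_ measurableSet_Icc
    exact (Complex.continuous_ofReal.comp_continuousOn (k2aux_contOn μ hcont m)).mul
      (cont_cpow_exp x hx _).continuousOn
  have hintg : ∀ m : ℕ, ∀ x : ℂ, x ≠ 0 →
      Integrable (fun β : ℝ => (k2aux μ m β : ℂ) * x ^ (((-β - (m:ℝ)) : ℝ) : ℂ))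
        (volume.restrict (Icc 0 1)) := by
    intro m x hx
    refine ContinuousOn.integrableOn_Icc ?_
    exact (Complex.continuous_ofReal.comp_continuousOn (k2aux_contOn μ hcont m)).mul
      (cont_cpow_exp x hx _).continuousOn
  have key := hasDerivAt_integral_of_dominated_loc_of_deriv_le (𝕜 := ℂ)
    (μ := volume.restrict (Icc (0:ℝ) 1))
    (F := fun x β => (k2aux μ n β : ℂ) * x ^ (((-β - (n:ℝ)) : ℝ) : ℂ))
    (F' := fun x β => (k2aux μ (n+1) β : ℂ) * x ^ (((-β - ((n+1:ℕ):ℝ)) : ℝ) : ℂ))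
    (bound := fun β => |k2aux μ (n+1) β| * (z.re / 2) ^ (-β - ((n+1:ℕ):ℝ)))
    (x₀ := z) (s := Metric.ball z (z.re / 2)) (Metric.ball_mem_nhds z hε0)
    ?_ (hintg n z hz0) (hmeas (n+1) z hz0) ?_ ?_ ?_
  · exact key.2
  · exact (eventually_ne_nhds hz0).mono fun x hx => hmeas n x hx
  · -- bound
    refine (ae_restrict_mem measurableSet_Icc).mono fun β hβ x hx => ?_
    have hxre := hball x hx
    have hx0 : x ≠ 0 := fun h => by rw [h] at hxre; simp at hxre; linarith
    rw [norm_mul]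
    have h1 : ‖((k2aux μ (n+1) β : ℝ) : ℂ)‖ = |k2aux μ (n+1) β| := by
      rw [Complex.norm_real, Real.norm_eq_abs]
    rw [h1]
    refine mul_le_mul_of_nonneg_left ?_ (abs_nonneg _)
    rw [Complex.norm_cpow_of_ne_zero hx0]
    simp only [Complex.ofReal_re, Complex.ofReal_im, mul_zero, Real.exp_zero, div_one]
    refine Real.rpow_le_rpow_of_nonpos hε0 ?_ ?_
    · exact le_trans hxre.le (le_trans (Complex.re_le_norm x) le_rfl)
    · have hβ0 : (0:ℝ) ≤ β := hβ.1
      have : (0:ℝ) ≤ ((n+1:ℕ):ℝ) := by positivity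
      linarith
  · -- bound integrable
    refine ContinuousOn.integrableOn_Icc ?_
    refine ((k2aux_contOn μ hcont (n+1)).abs).mul ?_
    refine Continuous.continuousOn ?_
    exact Continuous.rpow continuous_const (by continuity) fun β => Or.inl hε0.ne'
  · -- differentiability
    refine Eventually.of_forall fun β => fun x hx => ?_
    have hxs : x ∈ Complex.slitPlane :=
      Complex.mem_slitPlane_iff.2 (Or.inl (lt_trans hε0 (hball x hx)))
    have hd : HasDerivAt (fun y : ℂ => y ^ (((-β - (n:ℝ)) : ℝ) : ℂ))
        ((((-β - (n:ℝ)) : ℝ) : ℂ) * x ^ ((((-β - (n:ℝ)) : ℝ) : ℂ) - 1)) x :=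
      (Complex.hasStrictDerivAt_cpow_const hxs).hasDerivAt
    have h2 := hd.const_mul ((k2aux μ n β : ℝ) : ℂ)
    convert h2 using 1
    case e'_4 => rfl
    rw [show ((((-β - (n:ℝ)) : ℝ) : ℂ) - 1) = (((-β - ((n+1:ℕ):ℝ)) : ℝ) : ℂ) by
      push_cast; ring]
    show ((k2aux μ (n+1) β : ℝ) : ℂ) * x ^ (((-β - ((n+1:ℕ):ℝ)) : ℝ) : ℂ) = _
    rw [k2aux_succ]
    push_cast
    ring

lemma k2K_real (μ : ℝ → ℝ) (n : ℕ) (t : ℝ) (ht : 0 < t) :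
    k2K μ n (t : ℂ) = ((k2g μ n t : ℝ) : ℂ) := by
  rw [k2K, k2g]
  rw [show (fun β : ℝ => (k2aux μ n β : ℂ) * (t:ℂ) ^ (((-β - (n:ℝ)) : ℝ) : ℂ)) =
      fun β : ℝ => ((k2aux μ n β * t ^ (-β - (n:ℝ)) : ℝ) : ℂ) from funext fun β => by
    rw [Complex.ofReal_mul, Complex.ofReal_cpow ht.le]]
  exact integral_ofReal

lemma k2g_hasDeriv (μ : ℝ → ℝ) (hcont : ContinuousOn μ (Icc 0 1)) (n : ℕ)
    (t : ℝ) (ht : 0 < t) : HasDerivAt (k2g μ n) (k2g μ (n+1) t) t := by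
  have hz : (0:ℝ) < ((t:ℂ)).re := by simpa using ht
  have h2 := (k2K_hasDeriv μ hcont n (t:ℂ) hz).real_of_complex
  have hval : (k2K μ (n+1) (t:ℂ)).re = k2g μ (n+1) t := by
    rw [k2K_real μ (n+1) t ht, Complex.ofReal_re]
  rw [hval] at h2
  refine h2.congr_of_eventuallyEq ?_
  filter_upwards [Ioi_mem_nhds ht] with x hx
  rw [k2K_real μ n x hx, Complex.ofReal_re]

lemma k2g_analytic (μ : ℝ → ℝ) (hcont : ContinuousOn μ (Icc 0 1)) :
    AnalyticOnNhd ℝ (k2g μ 0) (Ioi 0) := by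
  have hU : IsOpen {z : ℂ | 0 < z.re} := isOpen_lt continuous_const Complex.continuous_re
  have hdiff : DifferentiableOn ℂ (k2K μ 0) {z : ℂ | 0 < z.re} := fun z hz =>
    ((k2K_hasDeriv μ hcont 0 z hz).differentiableAt).differentiableWithinAt
  have hA : AnalyticOnNhd ℂ (k2K μ 0) {z : ℂ | 0 < z.re} := hdiff.analyticOnNhd hU
  intro t ht
  have h1 : AnalyticAt ℂ (k2K μ 0) (t:ℂ) := hA _ (by simpa using (ht : (0:ℝ) < t))
  have h2 : AnalyticAt ℝ (fun x : ℝ => (k2K μ 0 (x:ℂ)).re) t := by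
    have hre : AnalyticAt ℝ (fun z : ℂ => z.re) (k2K μ 0 (t:ℂ)) := Complex.reCLM.analyticAt _
    have hof : AnalyticAt ℝ (fun x : ℝ => (x:ℂ)) t := Complex.ofRealCLM.analyticAt _
    have h3 : AnalyticAt ℝ (k2K μ 0 ∘ Complex.ofReal) t := (h1.restrictScalars).comp hof
    have h4 : AnalyticAt ℝ ((fun z : ℂ => z.re) ∘ (k2K μ 0 ∘ Complex.ofReal)) t :=
      AnalyticAt.comp hre h3
    exact h4
  refine h2.congr ?_
  filter_upwards [Ioi_mem_nhds ht] with x hx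
  rw [k2K_real μ 0 x hx, Complex.ofReal_re]

lemma k2g_zero (μ : ℝ → ℝ) :
    (fun t : ℝ => ∫ β in Icc (0:ℝ) 1, μ β * t ^ (-β) / Real.Gamma (1 - β)) = k2g μ 0 := by
  funext t
  rw [k2g]
  congr 1
  funext β
  rw [k2aux]
  simp only [Finset.range_zero, Finset.prod_empty, Nat.cast_zero, sub_zero, mul_one]
  rw [div_eq_mul_inv]
  ring

lemma k2_iter (μ : ℝ → ℝ) (hcont : ContinuousOn μ (Icc 0 1)) (n : ℕ) :
    ∀ t ∈ Ioi (0:ℝ), iteratedDerivWithin n (k2g μ 0) (Ioi 0) t = k2g μ n t := by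
  induction n with
  | zero => intro t ht; simp
  | succ n ih =>
    intro t ht
    rw [iteratedDerivWithin_succ]
    rw [derivWithin_congr ih (ih t ht)]
    rw [derivWithin_of_isOpen isOpen_Ioi ht]
    exact (k2g_hasDeriv μ hcont n t ht).deriv

lemma k2g_nonneg (μ : ℝ → ℝ) (hnonneg : ∀ β ∈ Icc (0:ℝ) 1, 0 ≤ μ β) (n : ℕ)
    (t : ℝ) (ht : 0 < t) : 0 ≤ (-1:ℝ)^n * k2g μ n t := by
  rw [k2g, ← integral_const_mul]
  refine setIntegral_nonneg measurableSet_Icc fun β hβ => ?_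
  rw [k2aux]
  have hprod : (∏ k ∈ Finset.range n, (-(β + (k:ℝ)))) =
      (-1:ℝ)^n * ∏ k ∈ Finset.range n, (β + (k:ℝ)) := by
    rw [show (fun k : ℕ => -(β + (k:ℝ))) = fun k : ℕ => (-1) * (β + (k:ℝ)) from
      funext fun k => by ring]
    rw [Finset.prod_mul_distrib, Finset.prod_const, Finset.card_range]
  rw [hprod]
  have hsq : (-1:ℝ)^n * (-1:ℝ)^n = 1 := by
    rw [← mul_pow]; norm_num
  have key : (-1:ℝ)^n * (μ β * ((-1:ℝ)^n * ∏ k ∈ Finset.range n, (β + (k:ℝ))) *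
      (Real.Gamma (1 - β))⁻¹ * t ^ (-β - (n:ℝ))) =
      ((-1:ℝ)^n * (-1:ℝ)^n) * (μ β * (∏ k ∈ Finset.range n, (β + (k:ℝ))) *
      (Real.Gamma (1 - β))⁻¹ * t ^ (-β - (n:ℝ))) := by ring
  rw [key, hsq, one_mul]
  have h1 : 0 ≤ μ β := hnonneg β hβ
  have h2 : 0 ≤ ∏ k ∈ Finset.range n, (β + (k:ℝ)) :=
    Finset.prod_nonneg fun k _ => by have := hβ.1; positivity
  have h3 : 0 ≤ (Real.Gamma (1 - β))⁻¹ :=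
    inv_nonneg.2 (Real.Gamma_nonneg_of_nonneg (by linarith [hβ.2]))
  have h4 : 0 ≤ t ^ (-β - (n:ℝ)) := Real.rpow_nonneg ht.le _
  positivity

theorem k2_cm (μ : ℝ → ℝ)
    (hcont : ContinuousOn μ (Icc 0 1))
    (hnonneg : ∀ β ∈ Icc (0:ℝ) 1, 0 ≤ μ β) :
    CompletelyMonotoneOn
      (fun t : ℝ => ∫ β in Icc (0:ℝ) 1, μ β * t ^ (-β) / Real.Gamma (1 - β)) := by
  rw [k2g_zero μ]
  constructor
  · refine ContDiffOn.of_le (n := ω) ?_ le_top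
    rw [contDiffOn_omega_iff_analyticOn (uniqueDiffOn_Ioi 0)]
    exact (k2g_analytic μ hcont).analyticOn
  · intro n t ht
    rw [k2_iter μ hcont n t ht]
    exact k2g_nonneg μ hnonneg n t ht
end

section
/- The function g(s) = (s-1)/log s (extended by g(1) = 1) is a Bernstein function on (0,∞). -/
open Set

open MeasureTheory Real Filter Topology

noncomputable def Gc : ℂ → ℂ := fun z => if z = 1 then 1 else (z - 1) / Complex.log z

-- differentiability away from 1 on slit plane
lemma Gc_diff_at {z : ℂ} (hz : z ∈ Complex.slitPlane) (h1 : z ≠ 1) :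
    DifferentiableAt ℂ Gc z := by
  have h0 : z ≠ 0 := Complex.slitPlane_ne_zero hz
  have hlog : Complex.log z ≠ 0 := by
    intro h
    have := Complex.exp_log h0
    rw [h, Complex.exp_zero] at this
    exact h1 this.symm
  have hd : DifferentiableAt ℂ (fun w => (w - 1) / Complex.log w) z :=
    (differentiableAt_id.sub (differentiableAt_const 1)).div
      (Complex.differentiableAt_log hz) hlog
  apply hd.congr_of_eventuallyEq
  filter_upwards [isOpen_ne.mem_nhds (x := z) h1] with w (hw : w ≠ 1)
  simp [Gc, hw]

lemma Gc_analyticAt {s : ℝ} (hs : 0 < s) : AnalyticAt ℂ Gc (s : ℂ) := by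
  have hslit : (s : ℂ) ∈ Complex.slitPlane := by
    exact Complex.ofReal_mem_slitPlane.2 hs
  by_cases h1 : (s : ℂ) = 1
  · -- removable singularity at 1
    rw [h1]
    apply Complex.analyticAt_of_differentiable_on_punctured_nhds_of_continuousAt
    · have hU : {z : ℂ | z ≠ 1 ∧ z ∈ Complex.slitPlane} ∈ 𝓝[≠] (1 : ℂ) := by
        apply Filter.inter_mem
        · exact eventually_nhdsWithin_of_forall (fun z hz => hz)
        · exact nhdsWithin_le_nhds (Complex.isOpen_slitPlane.mem_nhds (by
            exact Complex.mem_slitPlane_iff.2 (Or.inl one_pos)))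
      filter_upwards [hU] with z hz
      exact Gc_diff_at hz.2 hz.1
    · -- continuity at 1
      have hlog1 : HasDerivAt Complex.log 1 1 := by
        simpa using Complex.hasDerivAt_log (Complex.ofReal_mem_slitPlane.2 one_pos : ((1:ℝ):ℂ) ∈ Complex.slitPlane)
      have hslope : Tendsto (fun z : ℂ => Complex.log z / (z - 1)) (𝓝[≠] 1) (𝓝 1) := by
        have := hasDerivAt_iff_tendsto_slope.1 hlog1
        refine this.congr' ?_
        filter_upwards [self_mem_nhdsWithin] with z (hz : z ≠ 1)
        simp [slope, Complex.log_one, sub_zero, div_eq_inv_mul]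
      have hinv : Tendsto (fun z : ℂ => (z - 1) / Complex.log z) (𝓝[≠] 1) (𝓝 1) := by
        have := hslope.inv₀ one_ne_zero
        simpa [inv_div] using this
      have : Tendsto Gc (𝓝[≠] 1) (𝓝 1) := by
        refine hinv.congr' ?_
        filter_upwards [self_mem_nhdsWithin] with z (hz : z ≠ 1)
        simp [Gc, hz]
      have h2 : Tendsto Gc (𝓝[≠] (1:ℂ)) (𝓝 (Gc 1)) := by simpa [Gc] using this
      exact continuousWithinAt_compl_self.1 h2
  · have hlog : Complex.log s ≠ 0 := by
      rw [← Complex.ofReal_log hs.le]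
      have : Real.log s ≠ 0 := by
        intro h
        rcases Real.log_eq_zero.1 h with h' | h' | h'
        · exact hs.ne' h'
        · exact h1 (by rw [h']; norm_num)
        · linarith
      exact_mod_cast this
    have hd : AnalyticAt ℂ (fun w => (w - 1) / Complex.log w) s :=
      ((analyticAt_id.sub analyticAt_const).div (analyticAt_clog hslit) hlog)
    apply hd.congr
    filter_upwards [isOpen_ne.mem_nhds (x := (s:ℂ)) h1] with w (hw : w ≠ 1)
    simp [Gc, hw]

noncomputable def gfun : ℝ → ℝ := fun s => if s = 1 then 1 else (s - 1) / Real.log s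

lemma Gc_ofReal {s : ℝ} (hs : 0 < s) : Gc (s : ℂ) = ((gfun s : ℝ) : ℂ) := by
  by_cases h1 : s = 1
  · simp [Gc, gfun, h1]
  · have h1' : (s : ℂ) ≠ 1 := by exact_mod_cast (Complex.ofReal_eq_one.not.2 h1)
    simp only [Gc, gfun, h1, h1', if_false]
    rw [← Complex.ofReal_log hs.le]
    push_cast
    ring

lemma g_analyticAt {s : ℝ} (hs : 0 < s) : AnalyticAt ℝ gfun s := by
  have h1 : AnalyticAt ℝ (fun x : ℝ => (Gc (x : ℂ)).re) s := by
    apply (Complex.reCLM.analyticAt _).comp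
    exact ((Gc_analyticAt hs).restrictScalars (𝕜 := ℝ)).comp (Complex.ofRealCLM.analyticAt s)
  apply h1.congr
  filter_upwards [isOpen_Ioi.mem_nhds hs] with x (hx : 0 < x)
  rw [Gc_ofReal hx, Complex.ofReal_re]

noncomputable def Pn (n : ℕ) (t : ℝ) : ℝ := ∏ k ∈ Finset.range n, (t - k)

noncomputable def Fn (n : ℕ) (s : ℝ) : ℝ := ∫ t in Ioc (0:ℝ) 1, Pn n t * s ^ (t - (n:ℝ))

lemma Pn_cont (n : ℕ) : Continuous (Pn n) := by
  unfold Pn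
  exact continuous_finset_prod _ (fun k _ => continuous_id.sub continuous_const)

lemma integrand_cont (n : ℕ) {s : ℝ} (hs : 0 < s) :
    Continuous (fun t : ℝ => Pn n t * s ^ (t - (n:ℝ))) := by
  have : (fun t : ℝ => Pn n t * s ^ (t - (n:ℝ)))
      = fun t : ℝ => Pn n t * Real.exp (Real.log s * (t - n)) := by
    funext t; rw [Real.rpow_def_of_pos hs]
  rw [this]
  exact (Pn_cont n).mul (Real.continuous_exp.comp
    (continuous_const.mul (continuous_id.sub continuous_const)))

lemma integrand_integrable (n : ℕ) {s : ℝ} (hs : 0 < s) :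
    IntegrableOn (fun t : ℝ => Pn n t * s ^ (t - (n:ℝ))) (Ioc (0:ℝ) 1) := by
  exact ((integrand_cont n hs).continuousOn.integrableOn_Icc).mono_set Ioc_subset_Icc_self

lemma Pn_abs_le (n : ℕ) {t : ℝ} (ht : t ∈ Ioc (0:ℝ) 1) : |Pn n t| ≤ (n.factorial : ℝ) := by
  rw [← Finset.prod_range_add_one_eq_factorial]
  unfold Pn
  rw [Finset.abs_prod]
  push_cast
  apply Finset.prod_le_prod (fun k _ => abs_nonneg _)
  intro k _
  rw [abs_le]
  constructor <;> nlinarith [ht.1, ht.2, (Nat.cast_nonneg k : (0:ℝ) ≤ k)]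

lemma rpow_bound {a e e₀ : ℝ} (ha : 0 < a) (he1 : -e₀ ≤ e) (he2 : e ≤ 0) :
    a ^ e ≤ a ^ (-e₀) + 1 := by
  rcases le_or_gt a 1 with h | h
  · have : a ^ e ≤ a ^ (-e₀) := Real.rpow_le_rpow_of_exponent_ge ha h he1
    nlinarith
  · have : a ^ e ≤ 1 := Real.rpow_le_one_of_one_le_of_nonpos h.le he2
    have h2 : (0:ℝ) ≤ a ^ (-e₀) := (Real.rpow_pos_of_pos ha _).le
    linarith

lemma hasDerivAt_Fn (n : ℕ) {s : ℝ} (hs : 0 < s) : HasDerivAt (Fn n) (Fn (n+1) s) s := by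
  have key := hasDerivAt_integral_of_dominated_loc_of_deriv_le
    (μ := volume.restrict (Ioc (0:ℝ) 1))
    (F := fun (x : ℝ) (t : ℝ) => Pn n t * x ^ (t - (n:ℝ)))
    (F' := fun (x : ℝ) (t : ℝ) => Pn (n+1) t * x ^ (t - ((n+1 : ℕ):ℝ)))
    (x₀ := s)
    (bound := fun _ => ((n+1).factorial : ℝ) * ((s/2) ^ (-((n:ℝ)+1)) + 1))
    (Metric.ball_mem_nhds s (half_pos hs))
    (by
      filter_upwards [isOpen_Ioi.mem_nhds hs] with x (hx : 0 < x)
      exact (integrand_cont n hx).aestronglyMeasurable)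
    (integrand_integrable n hs)
    ((integrand_cont (n+1) hs).aestronglyMeasurable)
    (by
      filter_upwards [ae_restrict_mem measurableSet_Ioc] with t ht
      intro x hx
      have hx2 : s/2 < x := by
        have := abs_lt.1 (mem_ball_iff_norm.1 hx); linarith [this.1]
      have hxpos : 0 < x := lt_trans (half_pos hs) hx2
      have he2 : t - ((n+1:ℕ):ℝ) ≤ 0 := by
        push_cast; have := ht.2; linarith [Nat.cast_nonneg (α := ℝ) n]
      have he1 : -((n:ℝ)+1) ≤ t - ((n+1:ℕ):ℝ) := by push_cast; linarith [ht.1]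
      rw [Real.norm_eq_abs, abs_mul, abs_of_pos (Real.rpow_pos_of_pos hxpos _)]
      have h1 : x ^ (t - ((n+1:ℕ):ℝ)) ≤ (s/2) ^ (t - ((n+1:ℕ):ℝ)) :=
        Real.rpow_le_rpow_of_nonpos (half_pos hs) hx2.le he2
      have h2 : (s/2) ^ (t - ((n+1:ℕ):ℝ)) ≤ (s/2) ^ (-((n:ℝ)+1)) + 1 :=
        rpow_bound (half_pos hs) he1 he2
      exact mul_le_mul (Pn_abs_le (n+1) ht) (h1.trans h2)
        (Real.rpow_pos_of_pos hxpos _).le (Nat.cast_nonneg _))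
    (integrableOn_const (C := ((n+1).factorial : ℝ) * ((s/2) ^ (-((n:ℝ)+1)) + 1))
      (by simp [Real.volume_Ioc]))
    (by
      apply Filter.Eventually.of_forall
      intro t x hx
      have hx2 : s/2 < x := by
        have := abs_lt.1 (mem_ball_iff_norm.1 hx); linarith [this.1]
      have hxpos : 0 < x := lt_trans (half_pos hs) hx2
      have h := (Real.hasDerivAt_rpow_const (x := x) (p := t - (n:ℝ))
        (Or.inl hxpos.ne')).const_mul (Pn n t)
      convert h using 1
      · rfl
      simp only [Pn, Finset.prod_range_succ]
      push_cast
      rw [show t - ((n:ℝ)+1) = t - n - 1 by ring]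
      ring)
  exact key.2

lemma Fn_zero_eq {s : ℝ} (hs : 0 < s) : Fn 0 s = gfun s := by
  have h0 : Fn 0 s = ∫ t in (0:ℝ)..1, Real.exp (Real.log s * t) := by
    rw [intervalIntegral.integral_of_le zero_le_one]
    unfold Fn Pn
    apply setIntegral_congr_fun measurableSet_Ioc
    intro t _
    simp [Real.rpow_def_of_pos hs]
  by_cases h1 : s = 1
  · subst h1
    rw [h0]
    simp [gfun]
  · have hlog : Real.log s ≠ 0 := by
      intro h
      rcases Real.log_eq_zero.1 h with h' | h' | h' <;> [exact hs.ne' h'; exact h1 h'; linarith]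
    rw [h0, gfun, if_neg h1]
    have := intervalIntegral.integral_comp_mul_left (fun x => Real.exp x)
      (a := 0) (b := 1) (c := Real.log s) hlog
    rw [this]
    simp [integral_exp, Real.exp_log hs, smul_eq_mul]
    field_simp

lemma Pn_sign (n : ℕ) {t : ℝ} (ht : t ∈ Ioc (0:ℝ) 1) : 0 ≤ (-1:ℝ)^n * Pn (n+1) t := by
  induction n with
  | zero => simpa [Pn] using ht.1.le
  | succ n ih =>
    have hfac : t - ((n+1:ℕ):ℝ) ≤ 0 := by
      push_cast; linarith [ht.2, Nat.cast_nonneg (α := ℝ) n]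
    have : Pn (n+2) t = Pn (n+1) t * (t - ((n+1:ℕ):ℝ)) := by
      simp [Pn, Finset.prod_range_succ]
    rw [this]
    have := mul_nonneg ih (neg_nonneg.2 hfac)
    calc (0:ℝ) ≤ ((-1:ℝ)^n * Pn (n+1) t) * -(t - ((n+1:ℕ):ℝ)) := this
    _ = (-1:ℝ)^(n+1) * (Pn (n+1) t * (t - ((n+1:ℕ):ℝ))) := by ring

lemma Fn_sign (n : ℕ) {s : ℝ} (hs : 0 < s) : 0 ≤ (-1:ℝ)^n * Fn (n+1) s := by
  rw [Fn, ← integral_const_mul]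
  apply setIntegral_nonneg measurableSet_Ioc
  intro t ht
  rw [← mul_assoc]
  exact mul_nonneg (Pn_sign n ht) (Real.rpow_pos_of_pos hs _).le

lemma Fn_nonneg {s : ℝ} (hs : 0 < s) : 0 ≤ Fn 0 s := by
  apply setIntegral_nonneg measurableSet_Ioc
  intro t ht
  simp only [Pn, Finset.range_zero, Finset.prod_empty, one_mul]
  exact (Real.rpow_pos_of_pos hs _).le

lemma iter_Fn (m : ℕ) : ∀ n : ℕ, ∀ t ∈ Ioi (0:ℝ), iteratedDerivWithin m (Fn n) (Ioi 0) t = Fn (n+m) t := by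
  induction m with
  | zero => intro n t ht; simp
  | succ m ih =>
    intro n t ht
    rw [iteratedDerivWithin_succ]
    rw [derivWithin_congr (fun x hx => ih n x hx) (ih n t ht)]
    rw [derivWithin_of_isOpen isOpen_Ioi ht]
    rw [(hasDerivAt_Fn (n+m) ht).deriv]
    norm_num [add_assoc]

lemma derivWithin_g_eq : EqOn (derivWithin gfun (Ioi 0)) (Fn 1) (Ioi 0) := by
  intro s hs
  rw [derivWithin_of_isOpen isOpen_Ioi hs]
  apply HasDerivAt.deriv
  apply (hasDerivAt_Fn 0 hs).congr_of_eventuallyEq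
  filter_upwards [isOpen_Ioi.mem_nhds hs] with x (hx : 0 < x)
  exact (Fn_zero_eq hx).symm

theorem constant_weight_bernstein :
    BernsteinFn (fun s : ℝ => if s = 1 then 1 else (s - 1) / Real.log s) := by
  show BernsteinFn gfun
  have hA : AnalyticOnNhd ℝ gfun (Ioi 0) := fun s hs => g_analyticAt hs
  refine ⟨hA.contDiffOn isOpen_Ioi.uniqueDiffOn, ?_, ?_, ?_⟩
  · intro t ht
    rw [← Fn_zero_eq ht]
    exact Fn_nonneg ht
  · exact ((hA.deriv.contDiffOn isOpen_Ioi.uniqueDiffOn).congr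
      (fun x hx => derivWithin_of_isOpen isOpen_Ioi hx))
  · intro n t ht
    rw [iteratedDerivWithin_congr derivWithin_g_eq ht,
      iter_Fn n 1 t ht]
    have := Fn_sign n ht
    simpa [add_comm] using this
end

section
/- Suppose f ∈ L¹_loc([0,∞)) is nonnegative, nonincreasing on (0,∞), and f(t) → 0 as t → ∞. Then the function φ(s) = s · ∫₀^∞ e^{-st} f(t) dt is a Bernstein function on (0,∞). -/
set_option maxHeartbeats 1000000

open Set

open MeasureTheory Real Filter in
private lemma bf_pow_exp_int (k : ℕ) {s : ℝ} (hs : 0 < s) :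
    MeasureTheory.IntegrableOn (fun t : ℝ => t ^ k * Real.exp (-s * t)) (Ioi 0) := by
  refine integrable_of_isBigO_exp_neg (half_pos hs)
    (((continuous_pow k).mul (Real.continuous_exp.comp
      (continuous_const.mul continuous_id))).continuousOn) ?_
  have h0 : Tendsto (fun t : ℝ => t ^ (k : ℝ) * Real.exp (-(s/2) * t)) atTop (nhds 0) :=
    tendsto_rpow_mul_exp_neg_mul_atTop_nhds_zero _ _ (half_pos hs)
  rw [Asymptotics.isBigO_iff]
  refine ⟨1, ?_⟩
  have h1 : ∀ᶠ t : ℝ in atTop, t ^ (k : ℝ) * Real.exp (-(s/2) * t) < 1 :=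
    h0.eventually_lt_const one_pos
  filter_upwards [h1, eventually_ge_atTop (0:ℝ)] with t ht ht0
  rw [Real.rpow_natCast t k] at ht
  have hsplit : Real.exp (-s * t) = Real.exp (-(s/2) * t) * Real.exp (-(s/2) * t) := by
    rw [← Real.exp_add]; ring_nf
  rw [Real.norm_eq_abs, Real.norm_eq_abs, abs_of_nonneg (by positivity),
    abs_of_nonneg (Real.exp_pos _).le, hsplit, ← mul_assoc, one_mul]
  nlinarith [Real.exp_pos (-(s/2)*t), mul_nonneg (pow_nonneg ht0 k) (Real.exp_pos (-(s/2)*t)).le]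

open MeasureTheory Real in
private lemma bf_gamma_int (k : ℕ) {s : ℝ} (hs : 0 < s) :
    ∫ t in Ioi (0:ℝ), t ^ k * Real.exp (-s * t) = k.factorial / s ^ (k+1) := by
  have h1 : ∫ t in Ioi (0:ℝ), t ^ (((k:ℝ)+1) - 1) * Real.exp (-(s * t))
      = (1 / s) ^ ((k:ℝ)+1) * Real.Gamma ((k:ℝ)+1) :=
    Real.integral_rpow_mul_exp_neg_mul_Ioi (by positivity) hs
  have h2 : ∫ t in Ioi (0:ℝ), t ^ k * Real.exp (-s * t)
      = ∫ t in Ioi (0:ℝ), t ^ (((k:ℝ)+1) - 1) * Real.exp (-(s * t)) := by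
    refine setIntegral_congr_fun measurableSet_Ioi (fun t ht => ?_)
    rw [add_sub_cancel_right, Real.rpow_natCast, neg_mul]
  rw [h2, h1, Real.Gamma_nat_eq_factorial,
    show ((k:ℝ)+1) = ((k+1 : ℕ):ℝ) from by push_cast; ring, Real.rpow_natCast]
  rw [one_div, inv_pow]
  field_simp

open MeasureTheory Real Filter in
private lemma bf_aux_int {f : ℝ → ℝ}
    (hloc : MeasureTheory.LocallyIntegrableOn f (Ici 0))
    (hnonneg : ∀ t ∈ Ioi (0:ℝ), 0 ≤ f t)
    (hmono : AntitoneOn f (Ioi 0))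
    (k : ℕ) {s : ℝ} (hs : 0 < s) :
    MeasureTheory.IntegrableOn (fun t => t ^ k * Real.exp (-s * t) * f t) (Ioi 0) := by
  have hfm : AEStronglyMeasurable f (volume.restrict (Ioi (0:ℝ))) :=
    hloc.aestronglyMeasurable.mono_measure
      (Measure.restrict_mono Ioi_subset_Ici_self le_rfl)
  have hcont : Continuous (fun t : ℝ => t ^ k * Real.exp (-s * t)) :=
    (continuous_pow k).mul (Real.continuous_exp.comp (continuous_const.mul continuous_id))
  have hgm : AEStronglyMeasurable (fun t => t ^ k * Real.exp (-s * t) * f t)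
      (volume.restrict (Ioi (0:ℝ))) := hcont.aestronglyMeasurable.mul hfm
  rw [show Ioi (0:ℝ) = Ioc 0 1 ∪ Ioi 1 from (Ioc_union_Ioi_eq_Ioi zero_le_one).symm]
  refine MeasureTheory.IntegrableOn.union ?_ ?_
  · have hf1 : MeasureTheory.IntegrableOn f (Ioc (0:ℝ) 1) :=
      (hloc.integrableOn_compact_subset Icc_subset_Ici_self isCompact_Icc).mono_set
        Ioc_subset_Icc_self
    refine MeasureTheory.Integrable.mono hf1
      (hgm.mono_measure (Measure.restrict_mono Ioc_subset_Ioi_self le_rfl)) ?_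
    filter_upwards [ae_restrict_mem measurableSet_Ioc] with t ht
    have h1 : |t ^ k| ≤ 1 := by
      rw [abs_of_nonneg (pow_nonneg ht.1.le k)]
      exact pow_le_one₀ ht.1.le ht.2
    have h2 : |Real.exp (-s * t)| ≤ 1 := by
      rw [abs_of_nonneg (Real.exp_pos _).le]
      exact Real.exp_le_one_iff.mpr (by nlinarith [ht.1])
    calc ‖t ^ k * Real.exp (-s * t) * f t‖
        = |t ^ k| * |Real.exp (-s * t)| * ‖f t‖ := by
          rw [Real.norm_eq_abs, Real.norm_eq_abs, abs_mul, abs_mul]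
      _ ≤ 1 * 1 * ‖f t‖ :=
          mul_le_mul_of_nonneg_right (mul_le_mul h1 h2 (abs_nonneg _) zero_le_one)
            (norm_nonneg _)
      _ = ‖f t‖ := by ring
  · have hb : MeasureTheory.IntegrableOn
        (fun t : ℝ => f 1 * (t ^ k * Real.exp (-s * t))) (Ioi 1) :=
      ((bf_pow_exp_int k hs).mono_set (Ioi_subset_Ioi zero_le_one)).const_mul _
    refine MeasureTheory.Integrable.mono hb
      (hgm.mono_measure (Measure.restrict_mono (Ioi_subset_Ioi zero_le_one) le_rfl)) ?_
    filter_upwards [ae_restrict_mem measurableSet_Ioi] with t ht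
    have ht0 : (0:ℝ) < t := lt_trans one_pos ht
    have hft : 0 ≤ f t := hnonneg t ht0
    have hf1 : 0 ≤ f 1 := hnonneg 1 (mem_Ioi.2 one_pos)
    have hmle : f t ≤ f 1 := hmono (mem_Ioi.2 one_pos) (mem_Ioi.2 ht0) ht.le
    rw [Real.norm_eq_abs, Real.norm_eq_abs,
      abs_of_nonneg (by positivity), abs_of_nonneg (by positivity)]
    have hke : 0 ≤ t ^ k * Real.exp (-s * t) := by positivity
    nlinarith [mul_le_mul_of_nonneg_left hmle hke]

private lemma bf_chain_iter {f0 : ℝ → ℝ} {G : ℕ → ℝ → ℝ}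
    (hEq : Set.EqOn f0 (G 0) (Ioi 0))
    (h : ∀ n, ∀ s ∈ Ioi (0:ℝ), HasDerivAt (G n) (G (n+1) s) s) :
    ∀ n, ∀ s ∈ Ioi (0:ℝ), iteratedDerivWithin n f0 (Ioi 0) s = G n s := by
  intro n
  induction n with
  | zero => intro s hs; simpa using hEq hs
  | succ m ih =>
    intro s hs
    rw [iteratedDerivWithin_succ,
      derivWithin_of_isOpen isOpen_Ioi hs]
    have hev : (fun t => iteratedDerivWithin m f0 (Ioi 0) t) =ᶠ[nhds s] G m :=
      Filter.eventuallyEq_of_mem (isOpen_Ioi.mem_nhds hs) ih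
    rw [hev.deriv_eq]
    exact (h m s hs).deriv

open MeasureTheory Real Filter Complex in
theorem laplace_transform_bernstein (f : ℝ → ℝ)
    (hloc : MeasureTheory.LocallyIntegrableOn f (Ici 0))
    (hnonneg : ∀ t ∈ Ioi (0:ℝ), 0 ≤ f t)
    (hmono : AntitoneOn f (Ioi 0))
    (hlim : Filter.Tendsto f Filter.atTop (nhds 0)) :
    BernsteinFn (fun s : ℝ => s * ∫ t in Ioi (0:ℝ), Real.exp (-s * t) * f t) := by
  have hfm : AEStronglyMeasurable f (volume.restrict (Ioi (0:ℝ))) :=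
    hloc.aestronglyMeasurable.mono_measure
      (Measure.restrict_mono Ioi_subset_Ici_self le_rfl)
  set U : Set ℂ := {z | 0 < z.re} with hU
  have hUopen : IsOpen U := isOpen_lt continuous_const Complex.continuous_re
  set Fc : ℕ → ℂ → ℂ :=
    fun n z => ∫ t in Ioi (0:ℝ), (-(t:ℂ))^n * Complex.exp (-z * t) * (f t : ℂ) with hFcdef
  set F : ℕ → ℝ → ℝ :=
    fun n s => ∫ t in Ioi (0:ℝ), (-t)^n * Real.exp (-s * t) * f t with hFdef
  -- relation between real and complex versions
  have hrel : ∀ n (s : ℝ), F n s = (Fc n (s:ℂ)).re := by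
    intro n s
    have h1 : Fc n (s:ℂ) = ((F n s : ℝ) : ℂ) := by
      simp only [hFcdef, hFdef]
      have h0 : ((∫ t in Ioi (0:ℝ), (-t)^n * Real.exp (-s * t) * f t : ℝ) : ℂ)
          = ∫ t in Ioi (0:ℝ), (((-t)^n * Real.exp (-s * t) * f t : ℝ) : ℂ) :=
        integral_ofReal.symm
      rw [h0]
      refine integral_congr_ae (Filter.Eventually.of_forall (fun t => ?_))
      push_cast [Complex.ofReal_exp]
      ring
    rw [h1, Complex.ofReal_re]
  -- measurability of the complex integrand
  have hmC : ∀ (n : ℕ) (z : ℂ), AEStronglyMeasurable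
      (fun t : ℝ => (-(t:ℂ))^n * Complex.exp (-z * t) * (f t : ℂ))
      (volume.restrict (Ioi (0:ℝ))) := by
    intro n z
    refine (Continuous.aestronglyMeasurable ?_).mul
      (Complex.continuous_ofReal.comp_aestronglyMeasurable hfm)
    exact ((Complex.continuous_ofReal.neg).pow n).mul
      (Complex.continuous_exp.comp (continuous_const.mul Complex.continuous_ofReal))
  -- norm of the complex integrand
  have hnorm : ∀ (n : ℕ) (z : ℂ) (t : ℝ), 0 < t →
      ‖(-(t:ℂ))^n * Complex.exp (-z * t) * (f t : ℂ)‖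
        = t ^ n * Real.exp (-z.re * t) * |f t| := by
    intro n z t ht
    simp only [norm_mul, norm_pow, norm_neg, Complex.norm_real, Real.norm_eq_abs,
      Complex.norm_exp, abs_of_pos ht]
    rw [show (-z * (t:ℂ)).re = -z.re * t by simp [Complex.mul_re]]
  -- integrability of the complex integrand
  have hintC : ∀ (n : ℕ) {z : ℂ}, 0 < z.re → Integrable
      (fun t : ℝ => (-(t:ℂ))^n * Complex.exp (-z * t) * (f t : ℂ))
      (volume.restrict (Ioi (0:ℝ))) := by
    intro n z hz
    refine (bf_aux_int hloc hnonneg hmono n hz).mono' (hmC n z) ?_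
    filter_upwards [ae_restrict_mem measurableSet_Ioi] with t ht
    rw [hnorm n z t ht, _root_.abs_of_nonneg (hnonneg t ht)]
  -- complex derivative
  have hFcderiv : ∀ (n : ℕ) {z : ℂ}, 0 < z.re → HasDerivAt (Fc n) (Fc (n+1) z) z := by
    intro n z hz
    have key := hasDerivAt_integral_of_dominated_loc_of_deriv_le
      (F := fun (w : ℂ) (t : ℝ) => (-(t:ℂ))^n * Complex.exp (-w * t) * (f t : ℂ))
      (F' := fun (w : ℂ) (t : ℝ) => (-(t:ℂ))^(n+1) * Complex.exp (-w * t) * (f t : ℂ))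
      (bound := fun t : ℝ => t ^ (n+1) * Real.exp (-(z.re/2) * t) * f t)
      (Metric.ball_mem_nhds z (half_pos hz))
      (Filter.Eventually.of_forall (fun w => hmC n w))
      (hintC n hz) (hmC (n+1) z) ?_ (bf_aux_int hloc hnonneg hmono (n+1) (half_pos hz)) ?_
    · exact key.2
    · filter_upwards [ae_restrict_mem measurableSet_Ioi] with t ht
      intro w hw
      have hwre : z.re / 2 < w.re := by
        have h1 : |(w - z).re| ≤ ‖w - z‖ := Complex.abs_re_le_norm _
        rw [Metric.mem_ball, Complex.dist_eq] at hw
        have h2 := abs_lt.1 (lt_of_le_of_lt h1 hw)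
        simp only [Complex.sub_re] at h2
        linarith [h2.1]
      rw [hnorm (n+1) w t ht, _root_.abs_of_nonneg (hnonneg t ht)]
      have h2 : Real.exp (-w.re * t) ≤ Real.exp (-(z.re/2) * t) := by
        refine Real.exp_le_exp.2 ?_
        have ht0 : (0:ℝ) ≤ t := (le_of_lt (mem_Ioi.1 ht))
        nlinarith [mul_le_mul_of_nonneg_right hwre.le ht0]
      have h3 : 0 ≤ f t := hnonneg t ht
      have h4 : (0:ℝ) ≤ t ^ (n+1) := pow_nonneg ht.le _
      nlinarith [mul_le_mul_of_nonneg_left h2 h4, Real.exp_pos (-(z.re/2)*t)]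
    · filter_upwards [ae_restrict_mem measurableSet_Ioi] with t _
      intro w _
      have h1 : HasDerivAt (fun w : ℂ => -w * t) (-(t:ℂ)) w := by
        simpa using ((hasDerivAt_id w).neg.mul_const (t:ℂ))
      have h2 := (h1.cexp.const_mul ((-(t:ℂ))^n)).mul_const ((f t : ℂ))
      refine h2.congr_deriv ?_
      rw [pow_succ]
      ring
  -- real derivative chain for F
  have hFderiv : ∀ n, ∀ s ∈ Ioi (0:ℝ), HasDerivAt (F n) (F (n+1) s) s := by
    intro n s hs
    have hz : (0:ℝ) < ((s:ℂ)).re := by simpa using (mem_Ioi.1 hs)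
    have h := (hFcderiv n hz).real_of_complex
    have heq : F n = fun x : ℝ => (Fc n (x:ℂ)).re := funext (fun x => hrel n x)
    rw [heq, hrel (n+1) s]
    exact h
  -- analyticity of F n on Ioi 0
  have hFcan : ∀ n, AnalyticOnNhd ℂ (Fc n) U := by
    intro n
    have hdiff : DifferentiableOn ℂ (Fc n) U :=
      fun z hz => (hFcderiv n hz).differentiableAt.differentiableWithinAt
    exact hdiff.analyticOnNhd hUopen
  have hFan : ∀ n, AnalyticOnNhd ℝ (F n) (Ioi 0) := by
    intro n
    have hof : AnalyticOnNhd ℝ (fun x : ℝ => (x:ℂ)) (Ioi 0) :=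
      (Complex.ofRealCLM.analyticOnNhd _).congr isOpen_Ioi (fun x _ => rfl)
    have hmaps : MapsTo (fun x : ℝ => (x:ℂ)) (Ioi 0) U := by
      intro x hx; simpa [hU] using (mem_Ioi.1 hx)
    have hcomp : AnalyticOnNhd ℝ (fun x : ℝ => Fc n (x:ℂ)) (Ioi 0) :=
      ((hFcan n).restrictScalars).comp hof hmaps
    have hre : AnalyticOnNhd ℝ (fun x : ℝ => (Fc n (x:ℂ)).re) (Ioi 0) :=
      ((Complex.reCLM.analyticOnNhd (univ : Set ℂ)).comp hcomp (mapsTo_univ _ _)).congr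
        isOpen_Ioi (fun x _ => rfl)
    exact hre.congr isOpen_Ioi (fun x _ => (hrel n x).symm)
  -- the chain G
  set G : ℕ → ℝ → ℝ := fun n s => (n:ℝ) * F (n-1) s + s * F n s with hGdef
  have hGchain : ∀ n, ∀ s ∈ Ioi (0:ℝ), HasDerivAt (G n) (G (n+1) s) s := by
    intro n s hs
    match n with
    | 0 =>
      have h1 : HasDerivAt (fun s => s * F 0 s) (1 * F 0 s + s * F 1 s) s :=
        (hasDerivAt_id s).mul (hFderiv 0 s hs)
      have h2 : HasDerivAt (fun s => ((0:ℕ):ℝ) * F 0 s) (((0:ℕ):ℝ) * F 1 s) s :=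
        (hFderiv 0 s hs).const_mul _
      have h3 := h2.add h1
      refine h3.congr_deriv ?_
      simp only [hGdef]
      push_cast; ring
    | (m+1) =>
      have h1 : HasDerivAt (fun s => s * F (m+1) s) (1 * F (m+1) s + s * F (m+2) s) s :=
        (hasDerivAt_id s).mul (hFderiv (m+1) s hs)
      have h2 : HasDerivAt (fun s => (((m+1):ℕ):ℝ) * F m s) ((((m+1):ℕ):ℝ) * F (m+1) s) s :=
        (hFderiv m s hs).const_mul _
      have h3 := h2.add h1
      refine h3.congr_deriv ?_
      simp only [hGdef, Nat.add_sub_cancel]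
      push_cast; ring
  have hGeq0 : (fun s : ℝ => s * ∫ t in Ioi (0:ℝ), Real.exp (-s * t) * f t) = G 0 := by
    funext s
    simp only [hGdef, hFdef, Nat.cast_zero, zero_mul, zero_add, pow_zero, one_mul]
  have hGan : ∀ n, AnalyticOnNhd ℝ (G n) (Ioi 0) := fun n =>
    (analyticOnNhd_const.mul (hFan (n-1))).add (analyticOnNhd_id.mul (hFan n))
  -- sign condition
  have hsign : ∀ n, ∀ s ∈ Ioi (0:ℝ), 0 ≤ (-1:ℝ)^n * G (n+1) s := by
    intro n s hs
    have hs0 : (0:ℝ) < s := mem_Ioi.1 hs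
    set A : ℝ → ℝ := fun t => ((n:ℝ)+1) * (t^n * Real.exp (-s*t))
      - s * (t^(n+1) * Real.exp (-s*t)) with hAdef
    have hFint : ∀ k : ℕ, MeasureTheory.IntegrableOn
        (fun t => t ^ k * Real.exp (-s * t) * f t) (Ioi 0) :=
      fun k => bf_aux_int hloc hnonneg hmono k hs0
    have hAint : MeasureTheory.IntegrableOn A (Ioi 0) :=
      ((bf_pow_exp_int n hs0).const_mul _).sub ((bf_pow_exp_int (n+1) hs0).const_mul s)
    have hAfeq : (fun t => A t * f t)
        = fun t => ((n:ℝ)+1) * (t^n * Real.exp (-s*t) * f t)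
          - s * (t^(n+1) * Real.exp (-s*t) * f t) := by
      funext t; simp only [hAdef]; ring
    have hAfint : MeasureTheory.IntegrableOn (fun t => A t * f t) (Ioi 0) := by
      rw [hAfeq]
      exact ((hFint n).const_mul _).sub ((hFint (n+1)).const_mul s)
    -- ∫ A = 0
    have hIA : ∫ t in Ioi (0:ℝ), A t = 0 := by
      simp only [hAdef]
      rw [integral_sub ((bf_pow_exp_int n hs0).const_mul _)
        ((bf_pow_exp_int (n+1) hs0).const_mul s), integral_const_mul, integral_const_mul,
        bf_gamma_int n hs0, bf_gamma_int (n+1) hs0, Nat.factorial_succ]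
      have hsne : s ≠ 0 := ne_of_gt hs0
      field_simp
      push_cast
      ring
    -- value of ∫ A * f
    have hAf : ∫ t in Ioi (0:ℝ), A t * f t
        = ((n:ℝ)+1) * (∫ t in Ioi (0:ℝ), t^n * Real.exp (-s*t) * f t)
          - s * (∫ t in Ioi (0:ℝ), t^(n+1) * Real.exp (-s*t) * f t) := by
      rw [hAfeq, integral_sub ((hFint n).const_mul _) ((hFint (n+1)).const_mul s),
        integral_const_mul, integral_const_mul]
    -- F in terms of the positive integrals
    have hFn : ∀ k : ℕ, F k s
        = (-1:ℝ)^k * ∫ t in Ioi (0:ℝ), t^k * Real.exp (-s*t) * f t := by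
      intro k
      simp only [hFdef]
      rw [← integral_const_mul]
      refine integral_congr_ae (Filter.Eventually.of_forall (fun t => ?_))
      rw [neg_pow]; ring
    -- (-1)^n * G (n+1) s = ∫ A * f
    have hval : (-1:ℝ)^n * G (n+1) s = ∫ t in Ioi (0:ℝ), A t * f t := by
      simp only [hGdef, Nat.add_sub_cancel]
      rw [hFn n, hFn (n+1), hAf]
      have hc : (-1:ℝ)^n * (-1:ℝ)^n = 1 := by rw [← mul_pow]; norm_num
      have hc2 : ((-1:ℝ))^(n+1) = (-1:ℝ)^n * (-1) := pow_succ _ _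
      rw [hc2]
      push_cast
      set I1 := ∫ t in Ioi (0:ℝ), t^n * Real.exp (-s*t) * f t with hI1def
      set I2 := ∫ t in Ioi (0:ℝ), t^(n+1) * Real.exp (-s*t) * f t with hI2def
      linear_combination (((n:ℝ)+1) * I1 - s * I2) * hc
    -- pointwise nonnegativity
    set c0 : ℝ := ((n:ℝ)+1) / s with hc0def
    have hc0pos : 0 < c0 := by positivity
    have hptw : ∀ t ∈ Ioi (0:ℝ), 0 ≤ A t * (f t - f c0) := by
      intro t ht
      have ht0 : (0:ℝ) < t := mem_Ioi.1 ht
      have hAfact : A t = (t^n * Real.exp (-s*t)) * (((n:ℝ)+1) - s*t) := by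
        simp only [hAdef]; ring
      have hk1 : 0 ≤ t^n * Real.exp (-s*t) := by positivity
      rcases le_total t c0 with hle | hge
      · have hst : s * t ≤ (n:ℝ)+1 := by
          rw [hc0def] at hle
          calc s * t ≤ s * (((n:ℝ)+1)/s) := by nlinarith
            _ = (n:ℝ)+1 := by field_simp
        have hfge : f c0 ≤ f t := hmono (mem_Ioi.2 ht0) (mem_Ioi.2 hc0pos) hle
        rw [hAfact]
        exact mul_nonneg (mul_nonneg hk1 (by linarith)) (by linarith)
      · have hst : (n:ℝ)+1 ≤ s * t := by
          rw [hc0def] at hge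
          calc (n:ℝ)+1 = s * (((n:ℝ)+1)/s) := by field_simp
            _ ≤ s * t := by nlinarith
        have hfle : f t ≤ f c0 := hmono (mem_Ioi.2 hc0pos) (mem_Ioi.2 ht0) hge
        rw [hAfact]
        have hinner : 0 ≤ (((n:ℝ)+1) - s*t) * (f t - f c0) := by
          have h9 := mul_nonneg (neg_nonneg.2 (show ((n:ℝ)+1) - s*t ≤ 0 by linarith))
            (neg_nonneg.2 (show f t - f c0 ≤ 0 by linarith))
          nlinarith [h9]
        rw [mul_assoc]
        exact mul_nonneg hk1 hinner
    have hI1 : 0 ≤ ∫ t in Ioi (0:ℝ), A t * (f t - f c0) :=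
      setIntegral_nonneg measurableSet_Ioi hptw
    have hsplit : ∫ t in Ioi (0:ℝ), A t * (f t - f c0)
        = (∫ t in Ioi (0:ℝ), A t * f t) - f c0 * ∫ t in Ioi (0:ℝ), A t := by
      have heq2 : (fun t => A t * (f t - f c0)) = fun t => A t * f t - f c0 * A t :=
        funext (fun t => by ring)
      rw [heq2, integral_sub hAfint (hAint.const_mul _), integral_const_mul]
    rw [hval]
    rw [hsplit, hIA] at hI1
    linarith
  -- derivWithin equals G 1 on Ioi 0
  have hdw : EqOn (derivWithin
      (fun s : ℝ => s * ∫ t in Ioi (0:ℝ), Real.exp (-s * t) * f t) (Ioi 0)) (G 1) (Ioi 0) := by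
    intro s hs
    rw [derivWithin_of_isOpen isOpen_Ioi hs, hGeq0]
    exact (hGchain 0 s hs).deriv
  refine ⟨?_, ?_, ?_, ?_⟩
  · rw [hGeq0]
    exact (hGan 0).contDiffOn isOpen_Ioi.uniqueDiffOn
  · intro s hs
    exact mul_nonneg (le_of_lt (mem_Ioi.1 hs))
      (setIntegral_nonneg measurableSet_Ioi
        (fun t ht => mul_nonneg (Real.exp_pos _).le (hnonneg t ht)))
  · exact ((hGan 1).contDiffOn isOpen_Ioi.uniqueDiffOn).congr (fun x hx => hdw hx)
  · intro n t ht
    rw [bf_chain_iter hdw (fun m => hGchain (m+1)) n t ht]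
    exact hsign n t ht
end
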